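/- Let g be a real Lie algebra admitting a direct sum decomposition g = h ⊕ m of vector subspaces, with linear projections P_h : g → h and P_m : g → m. Fix v ∈ m. For n ≥ 0 and X ∈ m define T_n(X) = Σ_{i=0}^{n} (−1)^i C(n,i) B_{n,i}(X), where B_{n,i}(X) denotes the iterated bracket of X with v taken n+2 times in which each bracket is followed by the projection P_m, except the (i+1)-st bracket, which is followed by the projection P_h. Then for every n ≥ 0 and every X ∈ m, T_{n+2}(X) = P_m[P_m[T_n(X), v], v] − 2·P_m[T_n(P_m[X, v]), v] + T_n(P_m[P_m[X, v], v]). -/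

import Mathlib

/-!
For maps `F : M → M` put `ℓ F = L ∘ F` and `r F = F ∘ L`. These are commuting linear operators, so
the binomial theorem identifies `T n` with `(ℓ - r) ^ n (L ∘ φ)`, where `L = P_m[·, v]` and
`φ = P_h[·, v]`. Hence `T (n + 2) = (ℓ - r) ^ 2 (T n)`, and expanding `(ℓ - r) ^ 2 = ℓ² - 2ℓr + r²`
gives the recursion.
-/

open Finset
open LinearMap (funLeft)

theorem Commute.sub_pow_eq_sum_smul {R A : Type*} [CommRing R] [Ring A] [Algebra R A] {a b : A}
    (h : Commute a b) (n : ℕ) :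
    (a - b) ^ n = ∑ i ∈ range (n + 1), ((-1 : R) ^ i * n.choose i) • (a ^ (n - i) * b ^ i) := by
  rw [sub_eq_neg_add, h.neg_right.symm.add_pow]
  refine sum_congr rfl fun i _ => ?_
  rw [neg_pow, Algebra.smul_def, map_mul, map_pow, map_neg, map_one, map_natCast,
    (h.pow_pow _ _).eq, mul_assoc, ← Nat.cast_comm, mul_assoc, mul_assoc,
    (Nat.cast_commute (n.choose i) (b ^ i)).left_comm]

namespace LinearMap

variable {R M I : Type*} [CommRing R] [AddCommGroup M] [Module R M]

theorem commute_compLeft_funLeft (L : M →ₗ[R] M) (f : I → I) :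
    Commute (L.compLeft I) (funLeft R M f) :=
  rfl

theorem pow_compLeft_apply (L : Module.End R M) (k : ℕ) (F : I → M) (x : I) :
    (L.compLeft I ^ k) F x = L^[k] (F x) := by
  induction k with
  | zero => rfl
  | succ k ih => rw [pow_succ', Module.End.mul_apply, compLeft_apply, Function.comp_apply, ih,
      Function.iterate_succ_apply']

theorem pow_funLeft_apply (f : I → I) (k : ℕ) (F : I → M) (x : I) :
    (funLeft R M f ^ k) F x = F (f^[k] x) := by
  induction k generalizing x with
  | zero => rfl
  | succ k ih => rw [pow_succ', Module.End.mul_apply, funLeft_apply, ih,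
      Function.iterate_succ_apply]

end LinearMap

section BinomialSandwich

variable {R M : Type*} [CommRing R] [AddCommGroup M] [Module R M]

def binomialSandwich (L : Module.End R M) (φ : M → M) (n : ℕ) (X : M) : M :=
  ∑ i ∈ range (n + 1), ((-1 : R) ^ i * n.choose i) • L^[n + 1 - i] (φ (L^[i] X))

theorem binomialSandwich_eq_pow_sub (L : Module.End R M) (φ : M → M) (n : ℕ) :
    binomialSandwich L φ n = ((L.compLeft M - funLeft R M L) ^ n) (L ∘ φ) := by
  funext X
  rw [binomialSandwich, (LinearMap.commute_compLeft_funLeft L L).sub_pow_eq_sum_smul (R := R),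
    LinearMap.sum_apply, Finset.sum_apply]
  refine sum_congr rfl fun i hi => ?_
  rw [LinearMap.smul_apply, Pi.smul_apply, Module.End.mul_apply, LinearMap.pow_compLeft_apply,
    LinearMap.pow_funLeft_apply, Function.comp_apply, ← Function.iterate_succ_apply L,
    Nat.sub_add_comm (Nat.lt_succ_iff.mp (mem_range.mp hi))]

theorem binomialSandwich_add_two (L : Module.End R M) (φ : M → M) (n : ℕ) (X : M) :
    binomialSandwich L φ (n + 2) X =
      L (L (binomialSandwich L φ n X)) - (2 : R) • L (binomialSandwich L φ n (L X))
        + binomialSandwich L φ n (L (L X)) := by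
  rw [binomialSandwich_eq_pow_sub, add_comm n, pow_add, Module.End.mul_apply,
    ← binomialSandwich_eq_pow_sub, sq]
  simp only [Module.End.mul_apply, LinearMap.sub_apply, Pi.sub_apply, LinearMap.compLeft_apply,
    LinearMap.funLeft_apply, Function.comp_apply, map_sub]
  module

end BinomialSandwich

theorem stmt_3_general {g : Type*} [LieRing g] [LieAlgebra ℝ g]
    (m : Submodule ℝ g)
    (Ph Pm : g →ₗ[ℝ] g)
    (v : g)
    (B : ℕ → ℕ → g → g)
    (hB : ∀ n i X, B n i X =
      (fun y => Pm ⁅y, v⁆)^[n + 1 - i] (Ph ⁅(fun y => Pm ⁅y, v⁆)^[i] X, v⁆))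
    (T : ℕ → g → g)
    (hT : ∀ n X, T n X =
      ∑ i ∈ Finset.range (n + 1), ((-1 : ℝ) ^ i * (n.choose i : ℝ)) • B n i X) :
    ∀ n : ℕ, ∀ X ∈ m,
      T (n + 2) X =
        Pm ⁅Pm ⁅T n X, v⁆, v⁆ - (2 : ℝ) • Pm ⁅T n (Pm ⁅X, v⁆), v⁆
          + T n (Pm ⁅Pm ⁅X, v⁆, v⁆) := by
  let L : Module.End ℝ g := Pm ∘ₗ (LieModule.toEnd ℝ g g : g →ₗ[ℝ] Module.End ℝ g).flip v
  have hT_eq : T = binomialSandwich L (fun y => Ph ⁅y, v⁆) := by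
    funext n X
    simp only [hT, hB]
    rfl
  intro n X _
  rw [hT_eq]
  exact binomialSandwich_add_two L _ n X

/-- Let `g` be a real Lie algebra with a direct sum decomposition `g = h ⊕ m` into vector
subspaces, with linear projections `P_h`, `P_m`. Fix `v ∈ m`. For `n ≥ 0` and `X ∈ m` set
`T n X = Σ_{i=0}^{n} (−1)^i C(n,i) B n i X`, where `B n i X` is the iterated bracket of `X`
with `v` taken `n+2` times, each bracket followed by the projection `P_m` except the
`(i+1)`-st, which is followed by `P_h`.  Then
`T (n+2) X = P_m[P_m[T n X, v], v] − 2 P_m[T n (P_m[X,v]), v] + T n (P_m[P_m[X,v],v])`. -/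
theorem stmt_3 {g : Type*} [LieRing g] [LieAlgebra ℝ g]
    (h m : Submodule ℝ g) (hcompl : IsCompl h m)
    (Ph Pm : g →ₗ[ℝ] g)
    (hPh_mem : ∀ x, Ph x ∈ h) (hPm_mem : ∀ x, Pm x ∈ m)
    (hsum : ∀ x, Ph x + Pm x = x)
    (hPh_id : ∀ x ∈ h, Ph x = x) (hPm_id : ∀ x ∈ m, Pm x = x)
    (v : g) (hv : v ∈ m)
    (B : ℕ → ℕ → g → g)
    (hB : ∀ n i X, B n i X =
      (fun y => Pm ⁅y, v⁆)^[n + 1 - i] (Ph ⁅(fun y => Pm ⁅y, v⁆)^[i] X, v⁆))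
    (T : ℕ → g → g)
    (hT : ∀ n X, T n X =
      ∑ i ∈ Finset.range (n + 1), ((-1 : ℝ) ^ i * (n.choose i : ℝ)) • B n i X) :
    ∀ n : ℕ, ∀ X ∈ m,
      T (n + 2) X =
        Pm ⁅Pm ⁅T n X, v⁆, v⁆ - (2 : ℝ) • Pm ⁅T n (Pm ⁅X, v⁆), v⁆
          + T n (Pm ⁅Pm ⁅X, v⁆, v⁆) :=
  stmt_3_general m Ph Pm v B hB T hT
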